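/- arXiv:1402.1660 — 6 statements merged into one kernel-verified Lean document; each statement's English description precedes it below -/
import Mathlib

section
/- Let u_1,...,u_n ∈ ℝ³ be an embedding of a graph G lying in an affine plane that does not contain the origin, and let M be a CDV matrix for this embedding. Then the restriction of M to the edges of G, ω_{ij} := M_{ij} for (i,j) ∈ E(G), is an equilibrium stress for the embedding: for every vertex v_i, ∑_{v_j ∈ N(G,v_i)} M_{ij}(u_j − u_i) = 0. -/
open Finset

/-- If the embedding `u` of `G` lies in an affine plane not
containing the origin (written as `{x | ⟨a, x⟩ = 1}` for some `a ≠ 0`), and `M`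
is a CDV matrix for `u`, then the restriction of `M` to the edges of `G` is an
equilibrium stress: `∑_{j ∈ N(G,i)} M i j • (u j - u i) = 0` for every vertex. -/
theorem stmt2
    {n : ℕ} (G : SimpleGraph (Fin n)) [DecidableRel G.Adj]
    (u : Fin n → Fin 3 → ℝ)
    (a : Fin 3 → ℝ) (ha : a ≠ 0)
    (hplane : ∀ i, ∑ k, a k * u i k = 1)
    (M : Matrix (Fin n) (Fin n) ℝ)
    (hMsymm : M.IsSymm)
    (hMsupp : ∀ i j : Fin n, i ≠ j → ¬ G.Adj i j → M i j = 0)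
    (hMequi : ∀ i : Fin n, ∑ j, M i j • u j = 0) :
    ∀ i : Fin n, ∑ j ∈ G.neighborFinset i, M i j • (u j - u i) = 0 := by
  intro i
  have hcoord : ∀ k, ∑ j, M i j * u j k = 0 := by
    intro k
    have h := congrFun (hMequi i) k
    simpa [Finset.sum_apply] using h
  have hrow : ∑ j, M i j = 0 := by
    calc ∑ j, M i j = ∑ j, M i j * ∑ k, a k * u j k := by
          simp [hplane]
      _ = ∑ j, ∑ k, a k * (M i j * u j k) := by
          refine Finset.sum_congr rfl fun j _ => ?_
          rw [Finset.mul_sum]; exact Finset.sum_congr rfl fun k _ => by ring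
      _ = ∑ k, a k * ∑ j, M i j * u j k := by
          rw [Finset.sum_comm]
          simp [Finset.mul_sum]
      _ = 0 := by simp [hcoord]
  have hsub : G.neighborFinset i ⊆ Finset.univ.erase i := by
    intro j hj
    rw [SimpleGraph.mem_neighborFinset] at hj
    exact Finset.mem_erase.2 ⟨(G.ne_of_adj hj).symm, Finset.mem_univ j⟩
  have hzero : ∀ j ∈ Finset.univ.erase i, j ∉ G.neighborFinset i → M i j = 0 := by
    intro j hj hjs
    exact hMsupp i j (Finset.ne_of_mem_erase hj).symm
      (by simpa [SimpleGraph.mem_neighborFinset] using hjs)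
  have hsum_u : ∑ j ∈ G.neighborFinset i, M i j • u j = - (M i i • u i) := by
    rw [Finset.sum_subset hsub (fun j hj hjs => by rw [hzero j hj hjs]; simp)]
    have := Finset.sum_erase_eq_sub (f := fun j => M i j • u j) (Finset.mem_univ i)
    rw [this, hMequi i]; simp
  have hsum_c : ∑ j ∈ G.neighborFinset i, M i j = - M i i := by
    rw [Finset.sum_subset hsub (fun j hj hjs => hzero j hj hjs)]
    have := Finset.sum_erase_eq_sub (f := fun j => M i j) (Finset.mem_univ i)
    rw [this, hrow]; simp
  calc ∑ j ∈ G.neighborFinset i, M i j • (u j - u i)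
      = (∑ j ∈ G.neighborFinset i, M i j • u j)
        - (∑ j ∈ G.neighborFinset i, M i j) • u i := by
        rw [Finset.sum_smul]
        rw [← Finset.sum_sub_distrib]
        exact Finset.sum_congr rfl fun j _ => by rw [smul_sub]
    _ = 0 := by rw [hsum_u, hsum_c]; simp
end

section
/- Let u_1,...,u_n ∈ ℝ³ be an embedding of a graph G with no vertex at the origin, let α be an affine plane not containing the origin and not parallel to any vector u_i, and let p_i = λ_i u_i ∈ α be the central projection of u_i onto α. Then the map sending a CDV matrix M of (u_i) to the edge-function ω with ω_{ij} = M_{ij}/(λ_i λ_j) for (i,j) ∈ E(G) is a linear isomorphism between the vector space of CDV matrices of (u_i) and the vector space of equilibrium stresses of the flat embedding (p_i). -/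
open Finset

/-- A CDV matrix for an embedding `u` of a graph `G` into `ℝ³`. -/
def IsCDV {n : ℕ} (G : SimpleGraph (Fin n)) (u : Fin n → Fin 3 → ℝ)
    (M : Matrix (Fin n) (Fin n) ℝ) : Prop :=
  M.IsSymm ∧ (∀ i j : Fin n, i ≠ j → ¬ G.Adj i j → M i j = 0) ∧
    ∀ i : Fin n, ∑ j, M i j • u j = 0

/-- An equilibrium stress for an embedding `p` of `G`: a symmetric assignment
supported on the edges with `∑_j ω i j • (p j - p i) = 0` at every vertex. -/
def IsStress {n : ℕ} (G : SimpleGraph (Fin n)) (p : Fin n → Fin 3 → ℝ)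
    (ω : Fin n → Fin n → ℝ) : Prop :=
  (∀ i j, ω i j = ω j i) ∧ (∀ i j, ¬ G.Adj i j → ω i j = 0) ∧
    ∀ i : Fin n, ∑ j, ω i j • (p j - p i) = 0


/-! The inverse map sends a stress `ω` to `Λ Ω Λ`, where `Λ = diag λ` and `Ω` is the stress matrix
of `ω`: as `p j = λ j • u j`, row `i` of `Λ Ω Λ` applied to `u` is `λ i` times the equilibrium sum
of `ω` at `p i`. Conversely a CDV matrix `M` equals `Λ Ω Λ` for `ω = T M`: the two agree off the
diagonal, and the diagonal of each is forced by the row relation `∑ j, M i j / λ j = 0`, which comes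
from applying the functional `⟨a, ·⟩`, equal to `1 / λ j` at `u j`. -/

open Matrix

theorem mulVec_dotProduct_apply {ι κ R : Type*} [Fintype ι] [Fintype κ] [CommSemiring R]
    (X : Matrix ι ι R) (a : κ → R) (u : ι → κ → R) (i : ι) :
    (X *ᵥ fun j => a ⬝ᵥ u j) i = a ⬝ᵥ ∑ j, X i j • u j := by
  simp only [dotProduct_sum, dotProduct_smul, smul_eq_mul]
  rfl

section StressMatrix

variable {ι R E : Type*} [Fintype ι] [DecidableEq ι] [CommRing R] [AddCommGroup E] [Module R E]

/-- Signs are chosen so that the off-diagonal entries are `ω` itself; every row sums to zero. -/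
def stressMatrix (ω : ι → ι → R) : Matrix ι ι R :=
  Matrix.of ω - diagonal fun i => ∑ j, ω i j

theorem stressMatrix_apply_of_ne {ω : ι → ι → R} {i j : ι} (h : i ≠ j) :
    stressMatrix ω i j = ω i j := by
  simp [stressMatrix, h]

theorem stressMatrix_isSymm {ω : ι → ι → R} (hω : ∀ i j, ω i j = ω j i) :
    (stressMatrix ω).IsSymm := by
  ext i j
  obtain rfl | hij := eq_or_ne i j
  · rfl
  · rw [transpose_apply, stressMatrix_apply_of_ne hij.symm, stressMatrix_apply_of_ne hij, hω]

theorem stressMatrix_mulVec_one (ω : ι → ι → R) : stressMatrix ω *ᵥ 1 = 0 := by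
  ext i
  rw [stressMatrix, sub_mulVec, Pi.sub_apply, mulVec_diagonal]
  simp [mulVec, dotProduct]

theorem sum_stressMatrix_smul (ω : ι → ι → R) (p : ι → E) (i : ι) :
    ∑ j, stressMatrix ω i j • p j = ∑ j, ω i j • (p j - p i) := by
  simp [stressMatrix, sub_smul, diagonal_apply, ite_smul, Finset.sum_sub_distrib,
    smul_sub, Finset.sum_smul]

def scaledStressMatrix (lam : ι → R) (ω : ι → ι → R) : Matrix ι ι R :=
  diagonal lam * stressMatrix ω * diagonal lam

theorem scaledStressMatrix_apply (lam : ι → R) (ω : ι → ι → R) (i j : ι) :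
    scaledStressMatrix lam ω i j = lam i * stressMatrix ω i j * lam j := by
  rw [scaledStressMatrix, mul_diagonal, diagonal_mul]

theorem scaledStressMatrix_apply_of_ne (lam : ι → R) {ω : ι → ι → R} {i j : ι} (h : i ≠ j) :
    scaledStressMatrix lam ω i j = lam i * lam j * ω i j := by
  rw [scaledStressMatrix_apply, stressMatrix_apply_of_ne h, mul_right_comm]

theorem scaledStressMatrix_isSymm (lam : ι → R) {ω : ι → ι → R} (hω : ∀ i j, ω i j = ω j i) :
    (scaledStressMatrix lam ω).IsSymm := by
  simp [scaledStressMatrix, IsSymm, transpose_mul, (stressMatrix_isSymm hω).eq, Matrix.mul_assoc]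

theorem sum_scaledStressMatrix_smul {lam : ι → R} {u p : ι → E} (hp : ∀ i, p i = lam i • u i)
    (ω : ι → ι → R) (i : ι) :
    ∑ j, scaledStressMatrix lam ω i j • u j = lam i • ∑ j, ω i j • (p j - p i) := by
  simp only [← sum_stressMatrix_smul, hp, scaledStressMatrix_apply, Finset.smul_sum, smul_smul,
    mul_assoc]

end StressMatrix

section FieldLemmas

variable {ι 𝕜 : Type*} [Fintype ι] [DecidableEq ι] [Field 𝕜]

theorem scaledStressMatrix_mulVec_inv {lam : ι → 𝕜} (hlam : ∀ i, lam i ≠ 0) (ω : ι → ι → 𝕜) :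
    scaledStressMatrix lam ω *ᵥ (fun i => (lam i)⁻¹) = 0 := by
  have hones : diagonal lam *ᵥ (fun i => (lam i)⁻¹) = 1 := by
    ext i
    rw [mulVec_diagonal, mul_inv_cancel₀ (hlam i), Pi.one_apply]
  rw [scaledStressMatrix, ← mulVec_mulVec, hones, ← mulVec_mulVec, stressMatrix_mulVec_one,
    mulVec_zero]

theorem Matrix.eq_of_mulVec_eq_of_offDiag_eq {X Y : Matrix ι ι 𝕜} {c : ι → 𝕜}
    (hc : ∀ i, c i ≠ 0) (hXY : X *ᵥ c = Y *ᵥ c) (hoff : ∀ i j, i ≠ j → X i j = Y i j) :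
    X = Y := by
  ext i j
  obtain rfl | hij := eq_or_ne i j
  · have hrow := congrFun hXY i
    simp only [mulVec, dotProduct, ← Finset.add_sum_erase _ _ (Finset.mem_univ i)] at hrow
    have hrest : ∑ j ∈ Finset.univ.erase i, X i j * c j = ∑ j ∈ Finset.univ.erase i, Y i j * c j :=
      Finset.sum_congr rfl fun j hj => by rw [hoff i j (Finset.ne_of_mem_erase hj).symm]
    exact mul_right_cancel₀ (hc i) (add_right_cancel (hrest ▸ hrow))
  · exact hoff i j hij

end FieldLemmas

section EdgeScale

variable {V 𝕜 : Type*} [Field 𝕜] (G : SimpleGraph V) [DecidableRel G.Adj]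

def edgeScale (lam : V → 𝕜) (M : Matrix V V 𝕜) : V → V → 𝕜 :=
  fun i j => if G.Adj i j then M i j / (lam i * lam j) else 0

theorem edgeScale_smul_add (lam : V → 𝕜) (c : 𝕜) (M N : Matrix V V 𝕜) (i j : V) :
    edgeScale G lam (c • M + N) i j = c * edgeScale G lam M i j + edgeScale G lam N i j := by
  unfold edgeScale
  split_ifs
  · simp only [Matrix.add_apply, Matrix.smul_apply, smul_eq_mul]
    ring
  · simp

theorem edgeScale_scaledStressMatrix [Fintype V] [DecidableEq V] {lam : V → 𝕜}
    (hlam : ∀ i, lam i ≠ 0) {ω : V → V → 𝕜} (hω : ∀ i j, ¬ G.Adj i j → ω i j = 0) :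
    edgeScale G lam (scaledStressMatrix lam ω) = ω := by
  funext i j
  unfold edgeScale
  split_ifs with h
  · rw [scaledStressMatrix_apply_of_ne lam h.ne]
    exact mul_div_cancel_left₀ _ (mul_ne_zero (hlam i) (hlam j))
  · exact (hω i j h).symm

end EdgeScale

section CentralProjection

variable {n : ℕ} {G : SimpleGraph (Fin n)} {u p : Fin n → Fin 3 → ℝ}
  {a : Fin 3 → ℝ} {lam : Fin n → ℝ}

theorem IsCDV.eq_scaledStressMatrix_edgeScale [DecidableRel G.Adj] {M : Matrix (Fin n) (Fin n) ℝ}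
    (hM : IsCDV G u M) (hproj : ∀ i, lam i * a ⬝ᵥ u i = 1) :
    M = scaledStressMatrix lam (edgeScale G lam M) := by
  have hlam i : lam i ≠ 0 := left_ne_zero_of_mul_eq_one (hproj i)
  have hinv : (fun i => (lam i)⁻¹) = fun i => a ⬝ᵥ u i :=
    funext fun i => (eq_inv_of_mul_eq_one_right (hproj i)).symm
  refine eq_of_mulVec_eq_of_offDiag_eq (fun i => inv_ne_zero (hlam i)) ?_ fun i j hij => ?_
  · rw [scaledStressMatrix_mulVec_inv hlam, hinv]
    ext i
    rw [mulVec_dotProduct_apply, hM.2.2 i, dotProduct_zero, Pi.zero_apply]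
  · rw [scaledStressMatrix_apply_of_ne lam hij, edgeScale]
    split_ifs with h
    · field_simp [hlam i, hlam j]
    · rw [hM.2.1 i j hij h, mul_zero]

theorem IsCDV.isStress_edgeScale [DecidableRel G.Adj] {M : Matrix (Fin n) (Fin n) ℝ}
    (hM : IsCDV G u M) (hp : ∀ i, p i = lam i • u i) (hproj : ∀ i, lam i * a ⬝ᵥ u i = 1) :
    IsStress G p (edgeScale G lam M) := by
  refine ⟨fun i j => ?_, fun i j h => if_neg h, fun i => ?_⟩
  · simp only [edgeScale, G.adj_comm i j, hM.1.apply i j, mul_comm (lam i)]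
  · have h := sum_scaledStressMatrix_smul hp (edgeScale G lam M) i
    rw [← hM.eq_scaledStressMatrix_edgeScale hproj, hM.2.2 i] at h
    exact (smul_eq_zero.mp h.symm).resolve_left (left_ne_zero_of_mul_eq_one (hproj i))

theorem IsStress.isCDV_scaledStressMatrix {ω : Fin n → Fin n → ℝ} (hω : IsStress G p ω)
    (hp : ∀ i, p i = lam i • u i) : IsCDV G u (scaledStressMatrix lam ω) := by
  refine ⟨scaledStressMatrix_isSymm lam hω.1, fun i j hij h => ?_, fun i => ?_⟩
  · rw [scaledStressMatrix_apply_of_ne lam hij, hω.2.1 i j h, mul_zero]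
  · rw [sum_scaledStressMatrix_smul hp, hω.2.2 i, smul_zero]

end CentralProjection

theorem stmt4_general
    {n : ℕ} (G : SimpleGraph (Fin n)) [DecidableRel G.Adj]
    (u p : Fin n → Fin 3 → ℝ)
    (a : Fin 3 → ℝ)
    (lam : Fin n → ℝ)
    (hp : ∀ i, p i = lam i • u i)
    (hpmem : ∀ i, ∑ k, a k * p i k = 1)
    (T : Matrix (Fin n) (Fin n) ℝ → (Fin n → Fin n → ℝ))
    (hT : ∀ M i j, T M i j = if G.Adj i j then M i j / (lam i * lam j) else 0) :
    (∀ M, IsCDV G u M → IsStress G p (T M)) ∧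
    (∀ (c : ℝ) (M N : Matrix (Fin n) (Fin n) ℝ) (i j : Fin n),
      T (c • M + N) i j = c * T M i j + T N i j) ∧
    (∀ ω, IsStress G p ω →
      ∃! M : Matrix (Fin n) (Fin n) ℝ, IsCDV G u M ∧ T M = ω) := by
  obtain rfl : T = edgeScale G lam := funext fun M => funext₂ (hT M)
  have hproj i : lam i * a ⬝ᵥ u i = 1 := by
    rw [← smul_eq_mul, ← dotProduct_smul, ← hp]
    exact hpmem i
  have hlam i : lam i ≠ 0 := left_ne_zero_of_mul_eq_one (hproj i)
  refine ⟨fun M hM => hM.isStress_edgeScale hp hproj, edgeScale_smul_add G lam,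
    fun ω hω => ⟨scaledStressMatrix lam ω, ⟨hω.isCDV_scaledStressMatrix hp,
      edgeScale_scaledStressMatrix G hlam hω.2.1⟩, ?_⟩⟩
  rintro M ⟨hM, rfl⟩
  exact hM.eq_scaledStressMatrix_edgeScale hproj

/-- Let `u` be an embedding with no vertex at the origin, `α` the
plane `{x | ⟨a, x⟩ = 1}` (not through the origin, not parallel to any `u i`),
and `p i = λ i • u i ∈ α` the central projection.  Then
`M ↦ (ω i j = M i j / (λ i λ j)` on edges`)` is a linear isomorphism between
the space of CDV matrices of `u` and the space of equilibrium stresses of `p`: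
it maps CDV matrices to equilibrium stresses, is linear, and every equilibrium
stress of `p` comes from a unique CDV matrix `M` with
`M i j = λ i λ j ω i j` on the edges. -/
theorem stmt4
    {n : ℕ} (G : SimpleGraph (Fin n)) [DecidableRel G.Adj]
    (u p : Fin n → Fin 3 → ℝ)
    (hu : ∀ i, u i ≠ 0)
    (a : Fin 3 → ℝ) (ha : a ≠ 0)
    (hnotpar : ∀ i, ∑ k, a k * u i k ≠ 0)
    (lam : Fin n → ℝ)
    (hp : ∀ i, p i = lam i • u i)
    (hpmem : ∀ i, ∑ k, a k * p i k = 1)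
    (T : Matrix (Fin n) (Fin n) ℝ → (Fin n → Fin n → ℝ))
    (hT : ∀ M i j, T M i j = if G.Adj i j then M i j / (lam i * lam j) else 0) :
    (∀ M, IsCDV G u M → IsStress G p (T M)) ∧
    (∀ (c : ℝ) (M N : Matrix (Fin n) (Fin n) ℝ) (i j : Fin n),
      T (c • M + N) i j = c * T M i j + T N i j) ∧
    (∀ ω, IsStress G p ω →
      ∃! M : Matrix (Fin n) (Fin n) ℝ, IsCDV G u M ∧ T M = ω) :=
  stmt4_general G u p a lam hp hpmem T hT
end

section
/- Let W(v_c; v_1,...,v_n) be the wheel graph (center v_c joined to every vertex of the cycle v_1...v_n), embedded in ℝ² by points p_c, p_1,...,p_n such that for every i (indices cyclic mod n) the points p_i, p_{i+1}, p_c are not collinear. Then the stress defined by ω_{i,i+1} = −1/[p_i p_{i+1} p_c] on cycle edges and ω_{i,c} = [p_{i−1} p_i p_{i+1}]/([p_{i−1} p_i p_c][p_i p_{i+1} p_c]) on spokes, where [pqr] denotes twice the signed area det of the triangle, is an equilibrium stress for this embedding. -/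
/-!
At a rim vertex `b` with neighbours `a, c` and centre `q`, equilibrium is, after clearing
denominators, the Cramer-rule relation `[a b c] (q - b) = [b c q] (a - b) + [a b q] (c - b)`
among three vectors of the plane. Equilibrium at the centre then comes for free: summing the
rim equations, each cycle edge contributes two opposite forces, so the spoke forces sum to zero.
-/

open Finset

/-- `[p q r]`: twice the signed area of the triangle `p q r` in `ℝ²`,
i.e. the determinant of the 3×3 matrix with columns `(pₓ,p_y,1)`, `(qₓ,q_y,1)`,
`(rₓ,r_y,1)`. -/
def br2 (p q r : Fin 2 → ℝ) : ℝ :=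
  (q 0 - p 0) * (r 1 - p 1) - (q 1 - p 1) * (r 0 - p 0)

lemma br2_smul_sub_eq_add (a b c q : Fin 2 → ℝ) :
    br2 a b c • (q - b) = br2 b c q • (a - b) + br2 a b q • (c - b) := by
  ext x
  fin_cases x <;> simp [br2] <;> ring

lemma wheel_rim_equilibrium (a b c q : Fin 2 → ℝ) (hab : br2 a b q ≠ 0)
    (hbc : br2 b c q ≠ 0) :
    (br2 a b c / (br2 a b q * br2 b c q)) • (q - b) + (-1 / br2 a b q) • (a - b) +
      (-1 / br2 b c q) • (c - b) = 0 := by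
  linear_combination (norm := skip) (br2 a b q * br2 b c q)⁻¹ • br2_smul_sub_eq_add a b c q
  match_scalars <;> field_simp <;> ring

lemma wheel_center_equilibrium_of_rim {n : ℕ} [NeZero n] {R M : Type*} [CommRing R]
    [AddCommGroup M] [Module R M] (p : ZMod n → M) (c : M) (s t : ZMod n → R)
    (hrim : ∀ i, t i • (c - p i) + s (i - 1) • (p (i - 1) - p i) +
      s i • (p (i + 1) - p i) = 0) :
    ∑ i, t i • (p i - c) = 0 := by
  set g : ZMod n → M := fun i => s i • (p (i + 1) - p i)
  have hspoke : ∀ i, t i • (p i - c) = g i - g (i - 1) := by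
    intro i
    simp only [g, sub_add_cancel]
    linear_combination (norm := module) -hrim i
  rw [Fintype.sum_congr _ _ hspoke, Finset.sum_sub_distrib, sub_eq_zero]
  exact ((Equiv.subRight 1).sum_comp g).symm

theorem stmt5_general
    (n : ℕ) [NeZero n]
    (p : ZMod n → Fin 2 → ℝ) (pc : Fin 2 → ℝ)
    (hnd : ∀ i : ZMod n, br2 (p i) (p (i + 1)) pc ≠ 0)
    (s t : ZMod n → ℝ)
    (hs : ∀ i, s i = -1 / br2 (p i) (p (i + 1)) pc)
    (ht : ∀ i, t i = br2 (p (i - 1)) (p i) (p (i + 1)) /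
      (br2 (p (i - 1)) (p i) pc * br2 (p i) (p (i + 1)) pc)) :
    (∑ i : ZMod n, t i • (p i - pc) = 0) ∧
    ∀ i : ZMod n,
      t i • (pc - p i) + s (i - 1) • (p (i - 1) - p i) +
        s i • (p (i + 1) - p i) = 0 := by
  have hrim : ∀ i, t i • (pc - p i) + s (i - 1) • (p (i - 1) - p i) +
      s i • (p (i + 1) - p i) = 0 := by
    intro i
    have hprev := hnd (i - 1)
    rw [sub_add_cancel] at hprev
    rw [ht, hs, hs, sub_add_cancel]
    exact wheel_rim_equilibrium _ _ _ _ hprev (hnd i)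
  exact ⟨wheel_center_equilibrium_of_rim p pc s t hrim, hrim⟩

/-- For a wheel `W(v_c; v_1 … v_n)` embedded in `ℝ²` with all
triangles `(p_i, p_{i+1}, p_c)` nondegenerate, the stress
`ω_{i,i+1} = -1/[p_i p_{i+1} p_c]` on cycle edges and
`ω_{i,c} = [p_{i-1} p_i p_{i+1}] / ([p_{i-1} p_i p_c][p_i p_{i+1} p_c])` on
spokes is an equilibrium stress: equilibrium holds at the center and at every
base vertex. -/
theorem stmt5
    (n : ℕ) [NeZero n] (hn : 3 ≤ n)
    (p : ZMod n → Fin 2 → ℝ) (pc : Fin 2 → ℝ)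
    (hnd : ∀ i : ZMod n, br2 (p i) (p (i + 1)) pc ≠ 0)
    (s t : ZMod n → ℝ)
    (hs : ∀ i, s i = -1 / br2 (p i) (p (i + 1)) pc)
    (ht : ∀ i, t i = br2 (p (i - 1)) (p i) (p (i + 1)) /
      (br2 (p (i - 1)) (p i) pc * br2 (p i) (p (i + 1)) pc)) :
    (∑ i : ZMod n, t i • (p i - pc) = 0) ∧
    ∀ i : ZMod n,
      t i • (pc - p i) + s (i - 1) • (p (i - 1) - p i) +
        s i • (p (i + 1) - p i) = 0 :=
  stmt5_general n p pc hnd s t hs ht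
end

section
/- Let W(v_c; v_1,...,v_n) be a wheel embedded in ℝ² with p_i, p_{i+1}, p_c non-collinear for all i (cyclic indices). Then the space of equilibrium stresses on this embedding of the wheel is one-dimensional: every equilibrium stress is a scalar multiple of the atomic stress ω^a given by ω^a_{i,i+1} = −1/[p_i p_{i+1} p_c] and ω^a_{i,c} = [p_{i−1} p_i p_{i+1}]/([p_{i−1} p_i p_c][p_i p_{i+1} p_c]). -/
lemma ZMod.apply_eq_apply_zero_of_periodic {n : ℕ} {β : Type*} {f : ZMod n → β}
    (hf : Function.Periodic f 1) (i : ZMod n) : f i = f 0 := by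
  obtain ⟨k, rfl⟩ := ZMod.intCast_surjective i
  simpa using hf.int_mul k 0

section Equilibrium

variable {a b c q : Fin 2 → ℝ} {sa sb tb : ℝ}

lemma mul_br2_eq_of_equilibrium (h : tb • (q - b) + sa • (a - b) + sb • (c - b) = 0) :
    sa * br2 a b q = sb * br2 b c q := by
  have e0 := congrFun h 0
  have e1 := congrFun h 1
  simp only [Pi.add_apply, Pi.smul_apply, Pi.sub_apply, Pi.zero_apply, smul_eq_mul] at e0 e1
  simp only [br2]
  linear_combination (-(q 1 - b 1)) * e0 + (q 0 - b 0) * e1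

lemma mul_br2_eq_neg_of_equilibrium (h : tb • (q - b) + sa • (a - b) + sb • (c - b) = 0) :
    tb * br2 b c q = -(sa * br2 a b c) := by
  have e0 := congrFun h 0
  have e1 := congrFun h 1
  simp only [Pi.add_apply, Pi.smul_apply, Pi.sub_apply, Pi.zero_apply, smul_eq_mul] at e0 e1
  simp only [br2]
  linear_combination (-(c 1 - b 1)) * e0 + (c 0 - b 0) * e1

end Equilibrium

theorem stmt6_general
    (n : ℕ)
    (p : ZMod n → Fin 2 → ℝ) (pc : Fin 2 → ℝ)
    (hnd : ∀ i : ZMod n, br2 (p i) (p (i + 1)) pc ≠ 0)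
    (s t : ZMod n → ℝ)
    (hbase : ∀ i : ZMod n,
      t i • (pc - p i) + s (i - 1) • (p (i - 1) - p i) +
        s i • (p (i + 1) - p i) = 0) :
    ∃ μ : ℝ,
      (∀ i : ZMod n, s i = μ * (-1 / br2 (p i) (p (i + 1)) pc)) ∧
      (∀ i : ZMod n, t i = μ * (br2 (p (i - 1)) (p i) (p (i + 1)) /
        (br2 (p (i - 1)) (p i) pc * br2 (p i) (p (i + 1)) pc))) := by
  set F : ZMod n → ℝ := fun i => s i * br2 (p i) (p (i + 1)) pc
  have hperiodic : Function.Periodic F 1 := fun i => by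
    simpa using (mul_br2_eq_of_equilibrium (hbase (i + 1))).symm
  have hs : ∀ i, s i = F 0 / br2 (p i) (p (i + 1)) pc := fun i => by
    rw [← ZMod.apply_eq_apply_zero_of_periodic hperiodic i, mul_div_cancel_right₀ _ (hnd i)]
  refine ⟨-F 0, fun i => by rw [hs i]; ring, fun i => ?_⟩
  have hspoke := mul_br2_eq_neg_of_equilibrium (hbase i)
  have hprev := hnd (i - 1)
  rw [hs (i - 1), sub_add_cancel] at hspoke
  rw [sub_add_cancel] at hprev
  rw [mul_div_assoc', eq_div_iff (mul_ne_zero hprev (hnd i))]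
  field_simp at hspoke
  linear_combination hspoke

/-- For a wheel `W(v_c; v_1 … v_n)` embedded in `ℝ²` with all
triangles `(p_i, p_{i+1}, p_c)` nondegenerate, the space of equilibrium
stresses is one-dimensional: every stress `(s, t)` (with `s i` on the cycle
edge `(i, i+1)` and `t i` on the spoke `(i, c)`) satisfying the equilibrium
conditions at the center and at every base vertex is a scalar multiple `μ` of
the atomic stress `ω^a_{i,i+1} = -1/[p_i p_{i+1} p_c]`,
`ω^a_{i,c} = [p_{i-1} p_i p_{i+1}]/([p_{i-1} p_i p_c][p_i p_{i+1} p_c])`. -/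
theorem stmt6
    (n : ℕ) [NeZero n] (hn : 3 ≤ n)
    (p : ZMod n → Fin 2 → ℝ) (pc : Fin 2 → ℝ)
    (hnd : ∀ i : ZMod n, br2 (p i) (p (i + 1)) pc ≠ 0)
    (s t : ZMod n → ℝ)
    (hcenter : ∑ i : ZMod n, t i • (p i - pc) = 0)
    (hbase : ∀ i : ZMod n,
      t i • (pc - p i) + s (i - 1) • (p (i - 1) - p i) +
        s i • (p (i + 1) - p i) = 0) :
    ∃ μ : ℝ,
      (∀ i : ZMod n, s i = μ * (-1 / br2 (p i) (p (i + 1)) pc)) ∧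
      (∀ i : ZMod n, t i = μ * (br2 (p (i - 1)) (p i) (p (i + 1)) /
        (br2 (p (i - 1)) (p i) pc * br2 (p i) (p (i + 1)) pc))) :=
  stmt6_general n p pc hnd s t hbase
end

section
/- Let W(v_c; v_1,...,v_n) be a wheel embedded in ℝ³ by u_c, u_1, ..., u_n such that for all cyclic i the vectors u_i, u_{i+1}, u_c are linearly independent (equivalently, the points are not coplanar with the origin). Define M^a_{i,i+1} = −1/det(u_i u_{i+1} u_c) and M^a_{i,c} = det(u_{i−1} u_i u_{i+1})/(det(u_{i−1} u_i u_c) det(u_i u_{i+1} u_c)). Then there exist unique diagonal entries extending M^a to a CDV matrix for this embedding, and moreover any CDV matrix for this embedding is a scalar multiple of M^a. -/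
open Finset

/-- `det(a b c)`: determinant of the 3×3 matrix with columns `a, b, c ∈ ℝ³`. -/
def det3 (a b c : Fin 3 → ℝ) : ℝ :=
  Matrix.det !![a 0, b 0, c 0; a 1, b 1, c 1; a 2, b 2, c 2]


def cr (a b : Fin 3 → ℝ) : Fin 3 → ℝ :=
  ![a 1 * b 2 - a 2 * b 1, a 2 * b 0 - a 0 * b 2, a 0 * b 1 - a 1 * b 0]

def dot3 (a b : Fin 3 → ℝ) : ℝ := a 0 * b 0 + a 1 * b 1 + a 2 * b 2

lemma det3_expand (a b c : Fin 3 → ℝ) :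
    det3 a b c = a 0*(b 1*c 2 - b 2*c 1) + a 1*(b 2*c 0 - b 0*c 2) + a 2*(b 0*c 1 - b 1*c 0) := by
  simp [det3, Matrix.det_fin_three]; ring

@[simp] lemma cr_zero (a b : Fin 3 → ℝ) : cr a b 0 = a 1 * b 2 - a 2 * b 1 := rfl
@[simp] lemma cr_one (a b : Fin 3 → ℝ) : cr a b 1 = a 2 * b 0 - a 0 * b 2 := rfl
@[simp] lemma cr_two (a b : Fin 3 → ℝ) : cr a b 2 = a 0 * b 1 - a 1 * b 0 := rfl

lemma dot3_cr (a b c : Fin 3 → ℝ) : dot3 (cr a b) c = det3 a b c := by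
  simp [dot3, det3_expand]; ring

lemma dot3_smul_left (x : ℝ) (a b : Fin 3 → ℝ) : dot3 (x • a) b = x * dot3 a b := by
  simp [dot3]; ring

lemma cr_smul_left (x : ℝ) (a b : Fin 3 → ℝ) : cr (x • a) b = x • cr a b := by
  funext k; fin_cases k <;> · simp; ring

lemma cr_smul_right (x : ℝ) (a b : Fin 3 → ℝ) : cr a (x • b) = x • cr a b := by
  funext k; fin_cases k <;> · simp; ring

lemma cr_cr (a b c : Fin 3 → ℝ) : cr (cr a b) c = dot3 a c • b - dot3 b c • a := by
  funext k; fin_cases k <;> · simp [dot3]; ring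

lemma cr_cr_cr (a b c : Fin 3 → ℝ) : cr (cr a b) (cr b c) = det3 a b c • b := by
  funext k; fin_cases k <;> · simp [det3_expand]; ring

def crLmap (c : Fin 3 → ℝ) : (Fin 3 → ℝ) →ₗ[ℝ] (Fin 3 → ℝ) where
  toFun a := cr a c
  map_add' := by intros; funext k; fin_cases k <;> · simp; ring
  map_smul' := by intros; funext k; fin_cases k <;> · simp; ring

lemma cr_sum {ι : Type*} (sfin : Finset ι) (f : ι → Fin 3 → ℝ) (c : Fin 3 → ℝ) :
    cr (∑ i ∈ sfin, f i) c = ∑ i ∈ sfin, cr (f i) c :=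
  map_sum (crLmap c) f sfin

lemma det3_aba (a b : Fin 3 → ℝ) : det3 a b a = 0 := by simp [det3_expand]; ring
lemma det3_aab (a b : Fin 3 → ℝ) : det3 a a b = 0 := by simp [det3_expand]; ring
lemma det3_swap (a b c : Fin 3 → ℝ) : det3 a b c = -det3 b a c := by
  simp [det3_expand]; ring
lemma det3_cyc (a b c : Fin 3 → ℝ) : det3 a b c = det3 b c a := by
  simp [det3_expand]; ring

lemma det3_combo {x y z w : ℝ} {a b c d : Fin 3 → ℝ} (e f : Fin 3 → ℝ)
    (h : x • a + y • b + z • c + w • d = 0) :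
    x * det3 a e f + y * det3 b e f + z * det3 c e f + w * det3 d e f = 0 := by
  have h0 := congrFun h 0
  have h1 := congrFun h 1
  have h2 := congrFun h 2
  simp only [Pi.add_apply, Pi.smul_apply, smul_eq_mul, Pi.zero_apply] at h0 h1 h2
  simp only [det3_expand]
  linear_combination (e 1*f 2 - e 2*f 1) * h0 + (e 2*f 0 - e 0*f 2) * h1 + (e 0*f 1 - e 1*f 0) * h2

lemma parallel {v w : Fin 3 → ℝ} (hc : cr v w = 0) (hw : w ≠ 0) : ∃ l : ℝ, v = l • w := by
  have h0 := congrFun hc 0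
  have h1 := congrFun hc 1
  have h2 := congrFun hc 2
  simp only [cr_zero, cr_one, cr_two, Pi.zero_apply] at h0 h1 h2
  rcases Function.ne_iff.1 hw with ⟨k, hk⟩
  simp only [Pi.zero_apply] at hk
  fin_cases k
  · have hk0 : w 0 ≠ 0 := hk
    refine ⟨v 0 / w 0, ?_⟩
    funext j; fin_cases j <;> simp <;> field_simp
    · linear_combination -h2
    · linear_combination h1
  · have hk0 : w 1 ≠ 0 := hk
    refine ⟨v 1 / w 1, ?_⟩
    funext j; fin_cases j <;> simp <;> field_simp
    · linear_combination h2
    · linear_combination -h0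
  · have hk0 : w 2 ≠ 0 := hk
    refine ⟨v 2 / w 2, ?_⟩
    funext j; fin_cases j <;> simp <;> field_simp
    · linear_combination -h1
    · linear_combination h0

lemma ne_zero_first {a b c : Fin 3 → ℝ} (h : det3 a b c ≠ 0) : a ≠ 0 := by
  intro ha; apply h; subst ha; simp [det3_expand]
lemma ne_zero_last {a b c : Fin 3 → ℝ} (h : det3 a b c ≠ 0) : c ≠ 0 := by
  intro hc; apply h; subst hc; simp [det3_expand]

lemma keyA (a b c e : Fin 3 → ℝ) :
    (det3 a b c / (det3 a b e * det3 b c e)) • b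
      = cr ((det3 a b e)⁻¹ • cr a b) ((det3 b c e)⁻¹ • cr b c) := by
  rw [cr_smul_left, cr_smul_right, smul_smul, cr_cr_cr, smul_smul]
  congr 1
  rw [div_eq_mul_inv, mul_inv]; ring

lemma keyB (x y e : Fin 3 → ℝ) (hx : dot3 x e = 1) (hy : dot3 y e = 1) :
    cr (cr x y) e = y - x := by
  rw [cr_cr, hx, hy, one_smul, one_smul]

lemma four_vec (a b c e : Fin 3 → ℝ) :
    det3 b c e • a - det3 a c e • b + det3 a b e • c - det3 a b c • e = 0 := by
  funext k; fin_cases k <;> · simp [det3_expand]; ring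

lemma baseIdentity (a b c e : Fin 3 → ℝ) (h1 : det3 a b e ≠ 0) (h2 : det3 b c e ≠ 0) :
    (det3 a b c / (det3 a b e * det3 b c e)) • e + (-1 / det3 a b e) • a +
      (-1 / det3 b c e) • c + (det3 a c e / (det3 a b e * det3 b c e)) • b = 0 := by
  funext k
  have hk := congrFun (four_vec a b c e) k
  simp only [Pi.add_apply, Pi.sub_apply, Pi.smul_apply, smul_eq_mul, Pi.zero_apply] at hk ⊢
  rw [div_mul_eq_mul_div, div_mul_eq_mul_div, div_mul_eq_mul_div, div_mul_eq_mul_div,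
    div_add_div _ _ (mul_ne_zero h1 h2) h1,
    div_add_div _ _ (mul_ne_zero (mul_ne_zero h1 h2) h1) h2,
    div_add_div _ _ (mul_ne_zero (mul_ne_zero (mul_ne_zero h1 h2) h1) h2) (mul_ne_zero h1 h2),
    div_eq_zero_iff]
  left
  linear_combination (-(det3 a b e ^ 2 * det3 b c e ^ 2)) * hk

lemma det3_abb (a b : Fin 3 → ℝ) : det3 a b b = 0 := by simp [det3_expand]; ring

/-- Let a wheel `W(v_c; v_1 … v_n)` be embedded in `ℝ³` by
`u_c, u_1, …, u_n` with `u_i, u_{i+1}, u_c` linearly independent for all cyclic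
`i`.  Define the off-diagonal entries
`M^a_{i,i+1} = -1/det(u_i u_{i+1} u_c)` and
`M^a_{i,c} = det(u_{i-1} u_i u_{i+1})/(det(u_{i-1} u_i u_c) det(u_i u_{i+1} u_c))`.
Then there exist unique diagonal entries (`dC` at the center, `dB i` at the
base vertices) extending `M^a` to a CDV matrix for this embedding (i.e. the
CDV equilibrium condition holds at the center and at every base vertex), and
every CDV matrix `(s, t, dC', dB')` for this embedding of the wheel is a
scalar multiple of `M^a`. -/
theorem stmt7
    (n : ℕ) [NeZero n] (hn : 3 ≤ n)
    (u : ZMod n → Fin 3 → ℝ) (uc : Fin 3 → ℝ)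
    (hindep : ∀ i : ZMod n, det3 (u i) (u (i + 1)) uc ≠ 0)
    (sa ta : ZMod n → ℝ)
    (hsa : ∀ i, sa i = -1 / det3 (u i) (u (i + 1)) uc)
    (hta : ∀ i, ta i = det3 (u (i - 1)) (u i) (u (i + 1)) /
      (det3 (u (i - 1)) (u i) uc * det3 (u i) (u (i + 1)) uc)) :
    (∃! d : ℝ × (ZMod n → ℝ),
      ((∑ i : ZMod n, ta i • u i) + d.1 • uc = 0) ∧
      ∀ i : ZMod n,
        ta i • uc + sa (i - 1) • u (i - 1) + sa i • u (i + 1) +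
          d.2 i • u i = 0) ∧
    ∀ (s t : ZMod n → ℝ) (dC : ℝ) (dB : ZMod n → ℝ),
      ((∑ i : ZMod n, t i • u i) + dC • uc = 0) →
      (∀ i : ZMod n,
        t i • uc + s (i - 1) • u (i - 1) + s i • u (i + 1) +
          dB i • u i = 0) →
      ∃ μ : ℝ, (∀ i, s i = μ * sa i) ∧ (∀ i, t i = μ * ta i) := by
  have e1 : ∀ i : ZMod n, i - 1 + 1 = i := fun i => sub_add_cancel i 1
  have hD' : ∀ i : ZMod n, det3 (u (i - 1)) (u i) uc ≠ 0 := fun i => by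
    have h := hindep (i - 1); rwa [e1 i] at h
  have uc_ne : uc ≠ 0 := ne_zero_last (hindep 0)
  have hu_ne : ∀ i : ZMod n, u i ≠ 0 := fun i => ne_zero_first (hindep i)
  have hbase : ∀ i : ZMod n,
      ta i • uc + sa (i - 1) • u (i - 1) + sa i • u (i + 1) +
        (det3 (u (i - 1)) (u (i + 1)) uc /
          (det3 (u (i - 1)) (u i) uc * det3 (u i) (u (i + 1)) uc)) • u i = 0 := by
    intro i
    have hs1 : sa (i - 1) = -1 / det3 (u (i - 1)) (u i) uc := by rw [hsa (i - 1), e1 i]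
    rw [hta i, hsa i, hs1]
    exact baseIdentity (u (i - 1)) (u i) (u (i + 1)) uc (hD' i) (hindep i)
  -- the auxiliary vectors p
  set p : ZMod n → Fin 3 → ℝ :=
    fun j => (det3 (u j) (u (j + 1)) uc)⁻¹ • cr (u j) (u (j + 1)) with hp
  have hpj : ∀ j, p j = (det3 (u j) (u (j + 1)) uc)⁻¹ • cr (u j) (u (j + 1)) :=
    fun j => by rw [hp]
  have hA : ∀ i : ZMod n, ta i • u i = cr (p (i - 1)) (p i) := by
    intro i
    rw [hpj, hpj, e1 i, hta i]
    exact keyA (u (i - 1)) (u i) (u (i + 1)) uc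
  have hdotp : ∀ j, dot3 (p j) uc = 1 := fun j => by
    rw [hpj, dot3_smul_left, dot3_cr]
    exact inv_mul_cancel₀ (hindep j)
  have hS : cr (∑ i : ZMod n, ta i • u i) uc = 0 := by
    rw [cr_sum]
    have step : ∀ i : ZMod n, cr (ta i • u i) uc = p i - p (i - 1) := fun i => by
      rw [hA i, keyB _ _ _ (hdotp _) (hdotp _)]
    rw [Finset.sum_congr rfl (fun i _ => step i), Finset.sum_sub_distrib, sub_eq_zero]
    exact Fintype.sum_equiv (Equiv.addRight (1 : ZMod n)) _ _
      (fun x => by show p x = p (x + 1 - 1); rw [add_sub_cancel_right])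
  obtain ⟨l, hl⟩ := parallel hS uc_ne
  constructor
  · refine ⟨(-l, fun i => det3 (u (i - 1)) (u (i + 1)) uc /
        (det3 (u (i - 1)) (u i) uc * det3 (u i) (u (i + 1)) uc)), ⟨?_, hbase⟩, ?_⟩
    · rw [hl, neg_smul, add_neg_cancel]
    · rintro ⟨dC', dB'⟩ ⟨hc', hb'⟩
      have h1 : dC' = -l := by
        have heq : (∑ i : ZMod n, ta i • u i) + dC' • uc =
            (∑ i : ZMod n, ta i • u i) + (-l) • uc := by
          rw [hc', hl, neg_smul, add_neg_cancel]
        have h3 := add_left_cancel heq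
        have h2 : (dC' - -l) • uc = 0 := by rw [sub_smul, h3, sub_self]
        rcases smul_eq_zero.1 h2 with h | h
        · exact sub_eq_zero.1 h
        · exact absurd h uc_ne
      have h2 : dB' = fun i => det3 (u (i - 1)) (u (i + 1)) uc /
          (det3 (u (i - 1)) (u i) uc * det3 (u i) (u (i + 1)) uc) := by
        funext i
        have ha := eq_neg_of_add_eq_zero_right (hb' i)
        have hb := eq_neg_of_add_eq_zero_right (hbase i)
        have h3 : (dB' i - det3 (u (i - 1)) (u (i + 1)) uc /
            (det3 (u (i - 1)) (u i) uc * det3 (u i) (u (i + 1)) uc)) • u i = 0 := by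
          rw [sub_smul, ha, hb, sub_self]
        rcases smul_eq_zero.1 h3 with h | h
        · exact sub_eq_zero.1 h
        · exact absurd h (hu_ne i)
      exact Prod.ext h1 h2
  · intro s t dC0 dB0 hc0 hb0
    have hrec : ∀ i : ZMod n,
        s i * det3 (u i) (u (i + 1)) uc = s (i - 1) * det3 (u (i - 1)) (u i) uc := by
      intro i
      have hcombo := det3_combo (u i) uc (hb0 i)
      rw [det3_aba uc (u i), det3_aab (u i) uc,
        show det3 (u (i + 1)) (u i) uc = -det3 (u i) (u (i + 1)) uc from
          det3_swap _ _ _] at hcombo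
      linarith [hcombo]
    have hconst : ∀ i : ZMod n,
        s i * det3 (u i) (u (i + 1)) uc = s 0 * det3 (u 0) (u 1) uc := by
      have key : ∀ k : ℕ,
          s (k : ZMod n) * det3 (u (k : ZMod n)) (u ((k : ZMod n) + 1)) uc =
            s 0 * det3 (u 0) (u 1) uc := by
        intro k
        induction k with
        | zero => norm_num
        | succ m ih =>
          have h := hrec ((m : ZMod n) + 1)
          rw [add_sub_cancel_right] at h
          push_cast
          rw [h]
          exact ih
      intro i
      have hi : ((i.val : ℕ) : ZMod n) = i := ZMod.natCast_rightInverse i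
      rw [← hi]
      exact key i.val
    refine ⟨-(s 0 * det3 (u 0) (u 1) uc), ?_, ?_⟩
    · intro i
      rw [hsa i]
      have h := hconst i
      have hD2 := hindep i
      field_simp
      linear_combination h
    · intro i
      have hs'' : s i = -(s 0 * det3 (u 0) (u 1) uc) * sa i := by
        rw [hsa i]
        have h := hconst i
        have hD2 := hindep i
        field_simp
        linear_combination h
      have hcombo := det3_combo (u (i - 1)) (u i) (hb0 i)
      rw [det3_aab (u (i - 1)) (u i),
        det3_cyc uc (u (i - 1)) (u i),
        det3_cyc (u (i + 1)) (u (i - 1)) (u i),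
        show det3 (u i) (u (i - 1)) (u i) = 0 by
          rw [det3_swap, det3_abb, neg_zero]] at hcombo
      rw [hs'' , hsa i] at hcombo
      rw [hta i]
      have hD1 := hD' i
      have hD2 := hindep i
      field_simp at hcombo ⊢
      linear_combination hcombo
end

section
/- Let u_1, u_2, u_3 ∈ ℤ³ be linearly independent and let φ ∈ ℝ³ satisfy ⟨φ, u_k⟩ = 1 for k = 1, 2, 3. If L ≥ max_{k,l} |u_k − u_l| and |u_k| ≤ L for all k, then |φ| ≤ 2L². (Proof idea: the distance h from the origin to the plane {x : ⟨φ, x⟩ = 1} equals 1/|φ|, the tetrahedron with vertices 0, u_1, u_2, u_3 has volume ≥ 1/6 since it is a nondegenerate lattice tetrahedron, its volume equals (1/3)·h·Area(u_1 u_2 u_3), and Area(u_1 u_2 u_3) ≤ L².) -/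
open Finset

/-- The Euclidean norm on `ℝ³ = Fin 3 → ℝ`. -/
noncomputable def norm3 (x : Fin 3 → ℝ) : ℝ := Real.sqrt (∑ k, x k ^ 2)

/-- Let `u₁, u₂, u₃ ∈ ℤ³` be linearly independent (nonzero
determinant) and let `φ ∈ ℝ³` satisfy `⟨φ, u_k⟩ = 1` for `k = 1, 2, 3`.
If `L` bounds all pairwise differences `|u_k - u_l|` and all norms `|u_k|`,
then `|φ| ≤ 2 L²`. -/
theorem stmt15
    (u₁ u₂ u₃ : Fin 3 → ℤ) (φ : Fin 3 → ℝ) (L : ℝ)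
    (hind : det3 (fun k => (u₁ k : ℝ)) (fun k => (u₂ k : ℝ))
      (fun k => (u₃ k : ℝ)) ≠ 0)
    (hφ1 : ∑ k, φ k * (u₁ k : ℝ) = 1)
    (hφ2 : ∑ k, φ k * (u₂ k : ℝ) = 1)
    (hφ3 : ∑ k, φ k * (u₃ k : ℝ) = 1)
    (hdiff : ∀ v w : Fin 3 → ℤ, v ∈ ({u₁, u₂, u₃} : Set (Fin 3 → ℤ)) →
      w ∈ ({u₁, u₂, u₃} : Set (Fin 3 → ℤ)) →
      norm3 (fun k => (v k : ℝ) - (w k : ℝ)) ≤ L)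
    (hnorm : ∀ v : Fin 3 → ℤ, v ∈ ({u₁, u₂, u₃} : Set (Fin 3 → ℤ)) →
      norm3 (fun k => (v k : ℝ)) ≤ L) :
    norm3 φ ≤ 2 * L ^ 2 := by
  simp only [Fin.sum_univ_three] at hφ1 hφ2 hφ3
  set p0 := (u₁ 0 : ℝ) with hp0; set p1 := (u₁ 1 : ℝ) with hp1
  set p2 := (u₁ 2 : ℝ) with hp2
  set q0 := (u₂ 0 : ℝ) with hq0; set q1 := (u₂ 1 : ℝ) with hq1
  set q2 := (u₂ 2 : ℝ) with hq2
  set r0 := (u₃ 0 : ℝ) with hr0; set r1 := (u₃ 1 : ℝ) with hr1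
  set r2 := (u₃ 2 : ℝ) with hr2
  set D := det3 (fun k => (u₁ k : ℝ)) (fun k => (u₂ k : ℝ)) (fun k => (u₃ k : ℝ)) with hDdef
  have hDexp : D = p0 * q1 * r2 - p0 * q2 * r1 - q0 * p1 * r2 + q0 * p2 * r1
      + r0 * p1 * q2 - r0 * p2 * q1 := by
    simp [hDdef, det3, Matrix.det_fin_three]
    rw [hp0, hp1, hp2, hq0, hq1, hq2, hr0, hr1, hr2]
    ring
  clear_value p0 p1 p2 q0 q1 q2 r0 r1 r2 D
  -- D is (the cast of) a nonzero integer, so D^2 ≥ 1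
  have hDint : D = ((u₁ 0 * u₂ 1 * u₃ 2 - u₁ 0 * u₂ 2 * u₃ 1 - u₂ 0 * u₁ 1 * u₃ 2
      + u₂ 0 * u₁ 2 * u₃ 1 + u₃ 0 * u₁ 1 * u₂ 2 - u₃ 0 * u₁ 2 * u₂ 1 : ℤ) : ℝ) := by
    rw [hDexp, hp0, hp1, hp2, hq0, hq1, hq2, hr0, hr1, hr2]; push_cast; ring
  have hD2 : (1 : ℝ) ≤ D ^ 2 := by
    rw [hDint]
    have hz : (u₁ 0 * u₂ 1 * u₃ 2 - u₁ 0 * u₂ 2 * u₃ 1 - u₂ 0 * u₁ 1 * u₃ 2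
        + u₂ 0 * u₁ 2 * u₃ 1 + u₃ 0 * u₁ 1 * u₂ 2 - u₃ 0 * u₁ 2 * u₂ 1 : ℤ) ≠ 0 := by
      intro h
      apply hind
      show D = 0
      rw [hDint, h]; simp
    have h1 : (1 : ℤ) ≤ (u₁ 0 * u₂ 1 * u₃ 2 - u₁ 0 * u₂ 2 * u₃ 1 - u₂ 0 * u₁ 1 * u₃ 2
        + u₂ 0 * u₁ 2 * u₃ 1 + u₃ 0 * u₁ 1 * u₂ 2 - u₃ 0 * u₁ 2 * u₂ 1 : ℤ) ^ 2 := by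
      have h2 := Int.one_le_abs hz
      nlinarith [sq_abs (u₁ 0 * u₂ 1 * u₃ 2 - u₁ 0 * u₂ 2 * u₃ 1 - u₂ 0 * u₁ 1 * u₃ 2
        + u₂ 0 * u₁ 2 * u₃ 1 + u₃ 0 * u₁ 1 * u₂ 2 - u₃ 0 * u₁ 2 * u₂ 1 : ℤ)]
    calc (1:ℝ) = ((1:ℤ):ℝ) := by norm_num
    _ ≤ _ := by exact_mod_cast h1
  -- cross product n = (u₂-u₁) × (u₃-u₁)
  set n0 := (q1 - p1) * (r2 - p2) - (q2 - p2) * (r1 - p1) with hn0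
  set n1 := (q2 - p2) * (r0 - p0) - (q0 - p0) * (r2 - p2) with hn1
  set n2 := (q0 - p0) * (r1 - p1) - (q1 - p1) * (r0 - p0) with hn2
  clear_value n0 n1 n2
  -- Cramer: D * φ = n
  have e0 : D * φ 0 = n0 := by
    rw [hDexp, hn0]
    linear_combination (q1*r2 - q2*r1) * hφ1 - (p1*r2 - p2*r1) * hφ2 + (p1*q2 - p2*q1) * hφ3
  have e1 : D * φ 1 = n1 := by
    rw [hDexp, hn1]
    linear_combination (-(q0*r2 - q2*r0)) * hφ1 + (p0*r2 - p2*r0) * hφ2 - (p0*q2 - p2*q0) * hφ3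
  have e2 : D * φ 2 = n2 := by
    rw [hDexp, hn2]
    linear_combination (q0*r1 - q1*r0) * hφ1 - (p0*r1 - p1*r0) * hφ2 + (p0*q1 - p1*q0) * hφ3
  -- squared equations
  have s0 : n0 ^ 2 = D ^ 2 * φ 0 ^ 2 := by rw [← e0]; ring
  have s1 : n1 ^ 2 = D ^ 2 * φ 1 ^ 2 := by rw [← e1]; ring
  have s2 : n2 ^ 2 = D ^ 2 * φ 2 ^ 2 := by rw [← e2]; ring
  -- bound ∑ φ² ≤ ∑ n²
  have hφn : φ 0 ^ 2 + φ 1 ^ 2 + φ 2 ^ 2 ≤ n0 ^ 2 + n1 ^ 2 + n2 ^ 2 := by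
    have hsum : n0 ^ 2 + n1 ^ 2 + n2 ^ 2 = D ^ 2 * (φ 0 ^ 2 + φ 1 ^ 2 + φ 2 ^ 2) := by
      rw [s0, s1, s2]; ring
    rw [hsum]
    exact le_mul_of_one_le_left (by positivity) hD2
  -- Lagrange identity bound
  set A := (q0 - p0) ^ 2 + (q1 - p1) ^ 2 + (q2 - p2) ^ 2 with hA
  set B := (r0 - p0) ^ 2 + (r1 - p1) ^ 2 + (r2 - p2) ^ 2 with hB
  clear_value A B
  have hlag : n0 ^ 2 + n1 ^ 2 + n2 ^ 2 ≤ A * B := by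
    have hid : A * B - (n0 ^ 2 + n1 ^ 2 + n2 ^ 2)
        = ((q0-p0)*(r0-p0) + (q1-p1)*(r1-p1) + (q2-p2)*(r2-p2)) ^ 2 := by
      rw [hn0, hn1, hn2, hA, hB]; ring
    have hsq := sq_nonneg ((q0-p0)*(r0-p0) + (q1-p1)*(r1-p1) + (q2-p2)*(r2-p2))
    linarith
  -- norms of differences bounded by L
  have hna : norm3 (fun k => (u₂ k : ℝ) - (u₁ k : ℝ)) ≤ L := by
    apply hdiff <;> simp
  have hnb : norm3 (fun k => (u₃ k : ℝ) - (u₁ k : ℝ)) ≤ L := by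
    apply hdiff <;> simp
  have hL0 : 0 ≤ L := le_trans (Real.sqrt_nonneg _) hna
  have hsa : Real.sqrt A ≤ L := by
    rw [hA, hp0, hp1, hp2, hq0, hq1, hq2]
    simpa [norm3, Fin.sum_univ_three] using hna
  have hsb : Real.sqrt B ≤ L := by
    rw [hB, hp0, hp1, hp2, hr0, hr1, hr2]
    simpa [norm3, Fin.sum_univ_three] using hnb
  have hA0 : (0:ℝ) ≤ A := by rw [hA]; positivity
  have hB0 : (0:ℝ) ≤ B := by rw [hB]; positivity
  have hAL : A ≤ L ^ 2 := by
    have h2 := pow_le_pow_left₀ (Real.sqrt_nonneg A) hsa 2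
    rwa [Real.sq_sqrt hA0] at h2
  have hBL : B ≤ L ^ 2 := by
    have h2 := pow_le_pow_left₀ (Real.sqrt_nonneg B) hsb 2
    rwa [Real.sq_sqrt hB0] at h2
  -- conclude
  have key : φ 0 ^ 2 + φ 1 ^ 2 + φ 2 ^ 2 ≤ (2 * L ^ 2) ^ 2 := by
    have h1 : A * B ≤ L ^ 2 * L ^ 2 := mul_le_mul hAL hBL hB0 (by positivity)
    have h2 : (2 * L ^ 2) ^ 2 = 4 * (L ^ 2 * L ^ 2) := by ring
    have h3 : (0:ℝ) ≤ L ^ 2 * L ^ 2 := by positivity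
    linarith
  have : norm3 φ = Real.sqrt (φ 0 ^ 2 + φ 1 ^ 2 + φ 2 ^ 2) := by
    simp [norm3, Fin.sum_univ_three]
  rw [this]
  calc Real.sqrt (φ 0 ^ 2 + φ 1 ^ 2 + φ 2 ^ 2) ≤ Real.sqrt ((2 * L ^ 2) ^ 2) :=
        Real.sqrt_le_sqrt key
    _ = 2 * L ^ 2 := by
        rw [Real.sqrt_sq (by positivity)]
end
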